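/- arXiv:0805.1985 — 3 statements merged into one kernel-verified Lean document; each statement's English description precedes it below -/
import Mathlib

section
/- Let a = a(N), t = t(N) be positive integers with (a,t) = 1, a ≪ N, t ≪ N, and a = o(t) as N → ∞. Then for every ε > 0, (1/t) · Σ_{0≤|j|≤t/2} | Σ_{0≤|r|≤a/2} cos(2πr·t̄/a) · Σ₁(j,r) | ≪_ε N^ε / a. -/
/-!
Since `r ≡ k (mod a)` determines `r ∈ Ires a`, the `r`-sum collapses to one sum over `k ≤ t/2`,
and `2 cos(2πk t̄/a) cos(2πjk/t) = cos(2πn₊k/(at)) + cos(2πn₋k/(at))` with `n± = t̄t ± ja`.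
Summation by parts against the increasing weights `1 - cos(2πk/(at)) ≤ π²/(2a²)` bounds each
piece by `π²/a²` times a bound for the partial sums of `cos(2πnk/(at))`; by the geometric series
this is `1/|sin(πn/(at))| ≤ (at/2)(1/m + 1/(at - m))` for `m = n mod at ≠ 0`. As `j` runs over
`|j| ≤ t/2`, every residue `m` is hit at most twice, so the `j`-sum is a harmonic sum
`≪ t + at log(at)`. Dividing by `t` leaves `≪ log(at)/a ≪ N^ε/a`.
-/

open Finset Filter Asymptotics

noncomputable section

/-- `invMod x n` is the multiplicative inverse of `x` modulo `n` (as a natural number). -/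
def invMod (x n : ℕ) : ℕ := ((x : ZMod n))⁻¹.val

/-- A complete set of residues modulo `a`, represented by integers `r` with `|r| ≤ a/2`. -/
def Ires (a : ℕ) : Finset ℤ := Finset.Icc (-(((a - 1) / 2 : ℕ) : ℤ)) (((a / 2 : ℕ) : ℤ))

/-- The set of all integers `j` with `|j| ≤ t/2`. -/
def IresSym (t : ℕ) : Finset ℤ := Finset.Icc (-((t / 2 : ℕ) : ℤ)) (((t / 2 : ℕ) : ℤ))

/-- `Σ₁(j,r) = 2 ∑_{k ≤ t/2, k ≡ r (mod a)} (cos(2πk/(at)) - 1) cos(2πjk/t)`. -/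
def Sigma1 (a t : ℕ) (j r : ℤ) : ℝ :=
  2 * ∑ k ∈ (Finset.Icc 1 (t / 2)).filter (fun k : ℕ => (k : ℤ) % (a : ℤ) = r % (a : ℤ)),
    (Real.cos (2 * Real.pi * (k : ℝ) / ((a : ℝ) * (t : ℝ))) - 1) *
      Real.cos (2 * Real.pi * (j : ℝ) * (k : ℝ) / (t : ℝ))

/-- `Σ₂(j,r) = 2 ∑_{k ≤ t/2, k ≡ r (mod a)} sin(2πk/(at)) cos(2πjk/t)`. -/
def Sigma2 (a t : ℕ) (j r : ℤ) : ℝ :=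
  2 * ∑ k ∈ (Finset.Icc 1 (t / 2)).filter (fun k : ℕ => (k : ℤ) % (a : ℤ) = r % (a : ℤ)),
    Real.sin (2 * Real.pi * (k : ℝ) / ((a : ℝ) * (t : ℝ))) *
      Real.cos (2 * Real.pi * (j : ℝ) * (k : ℝ) / (t : ℝ))

/-- `M(j,r) = -2 sin(2πjr/t) ∑_{J ≤ t/(2a)} sin(2πJ/t) sin(2πjaJ/t)`. -/
def Mcorr (a t : ℕ) (j r : ℤ) : ℝ :=
  -2 * Real.sin (2 * Real.pi * (j : ℝ) * (r : ℝ) / (t : ℝ)) *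
    ∑ J ∈ Finset.Icc 1 (t / (2 * a)),
      Real.sin (2 * Real.pi * (J : ℝ) / (t : ℝ)) *
        Real.sin (2 * Real.pi * (j : ℝ) * (a : ℝ) * (J : ℝ) / (t : ℝ))

open Real

lemma sum_Icc_one_eq_sum_range {M : Type*} [AddCommMonoid M] (f : ℕ → M) (n : ℕ) :
    ∑ k ∈ Icc 1 n, f k = ∑ i ∈ range n, f (i + 1) := by
  rw [← Ico_add_one_right_eq_Icc, sum_Ico_eq_sum_range]
  simp [add_comm]

lemma abs_sum_Icc_mul_le_of_monotoneOn {g u : ℕ → ℝ} {M : ℕ} {H B : ℝ} (hH : 0 ≤ H)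
    (hmono : MonotoneOn g (Set.Icc 1 M)) (hg₁ : 0 ≤ g 1) (hgM : g M ≤ H)
    (hu : ∀ X ≤ M, |∑ k ∈ Icc 1 X, u k| ≤ B) :
    |∑ k ∈ Icc 1 M, g k * u k| ≤ 2 * H * B := by
  have hB : 0 ≤ B := (abs_nonneg _).trans (hu 0 M.zero_le)
  obtain rfl | hM := M.eq_zero_or_pos
  · simpa using mul_nonneg (mul_nonneg zero_le_two hH) hB
  have hmem : ∀ i < M, i + 1 ∈ Set.Icc 1 M := fun i hi => ⟨by omega, by omega⟩
  have by_parts := sum_range_by_parts (fun i => g (i + 1)) (fun i => u (i + 1)) M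
  simp only [smul_eq_mul, ← sum_Icc_one_eq_sum_range, Nat.sub_add_cancel hM] at by_parts
  have telescope : ∑ i ∈ range (M - 1), (g (i + 1 + 1) - g (i + 1)) = g M - g 1 := by
    rw [sum_range_sub (fun i => g (i + 1)), Nat.sub_add_cancel hM]
  rw [sum_Icc_one_eq_sum_range, by_parts]
  calc _ ≤ |g M * ∑ k ∈ Icc 1 M, u k| + |∑ i ∈ range (M - 1),
          (g (i + 1 + 1) - g (i + 1)) * ∑ k ∈ Icc 1 (i + 1), u k| := abs_sub _ _
    _ ≤ H * B + ∑ i ∈ range (M - 1), (g (i + 1 + 1) - g (i + 1)) * B := by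
      gcongr
      · have hgM_nonneg : 0 ≤ g M :=
          hg₁.trans (hmono ⟨le_rfl, hM⟩ ⟨hM, le_rfl⟩ hM)
        rw [abs_mul, abs_of_nonneg hgM_nonneg]
        exact mul_le_mul hgM (hu M le_rfl) (abs_nonneg _) hH
      · refine (abs_sum_le_sum_abs _ _).trans (sum_le_sum fun i hi => ?_)
        have hi := mem_range.mp hi
        have hinc : 0 ≤ g (i + 1 + 1) - g (i + 1) :=
          sub_nonneg.mpr (hmono (hmem i (by omega)) (hmem (i + 1) (by omega)) (by omega))
        rw [abs_mul, abs_of_nonneg hinc]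
        exact mul_le_mul_of_nonneg_left (hu _ (by omega)) hinc
    _ ≤ 2 * H * B := by
      rw [← sum_mul, telescope]
      nlinarith

lemma abs_sum_Icc_cos_mul_le {θ : ℝ} (hθ : sin (θ / 2) ≠ 0) (X : ℕ) :
    |∑ k ∈ Icc 1 X, cos (θ * k)| ≤ 1 / |sin (θ / 2)| := by
  set z : ℂ := Complex.exp (Complex.I * θ)
  have hz_norm : ‖z‖ = 1 := Complex.norm_exp_I_mul_ofReal θ
  have hz_sub : ‖z - 1‖ = 2 * |sin (θ / 2)| := by
    rw [Complex.norm_exp_I_mul_ofReal_sub_one, norm_mul, Real.norm_eq_abs]; norm_num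
  have hz1 : z - 1 ≠ 0 := by
    rw [← norm_ne_zero_iff, hz_sub]; positivity
  have hre : ∑ k ∈ Icc 1 X, cos (θ * k) = (∑ k ∈ Icc 1 X, z ^ k).re := by
    rw [Complex.re_sum]
    refine sum_congr rfl fun k _ => ?_
    rw [← Complex.exp_nat_mul, ← Complex.exp_ofReal_mul_I_re]
    push_cast; ring_nf
  have hgeom : ∑ k ∈ Icc 1 X, z ^ k = z * ((z ^ X - 1) / (z - 1)) := by
    rw [sum_Icc_one_eq_sum_range, ← geom_sum_eq (sub_ne_zero.mp hz1), mul_sum]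
    simp only [pow_succ, mul_comm]
  rw [hre]
  calc _ ≤ ‖∑ k ∈ Icc 1 X, z ^ k‖ := Complex.abs_re_le_norm _
    _ = ‖z ^ X - 1‖ / (2 * |sin (θ / 2)|) := by
      rw [hgeom, norm_mul, norm_div, hz_norm, hz_sub, one_mul]
    _ ≤ 2 / (2 * |sin (θ / 2)|) := by
      gcongr
      calc ‖z ^ X - 1‖ ≤ ‖z ^ X‖ + ‖(1 : ℂ)‖ := norm_sub_le _ _
        _ = 2 := by rw [norm_pow, hz_norm]; norm_num
    _ = 1 / |sin (θ / 2)| := by field_simp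

lemma one_div_sin_pi_mul_div_le {x q : ℝ} (hx : 0 < x) (hxq : 2 * x ≤ q) :
    1 / sin (π * x / q) ≤ q / (2 * x) := by
  have hq : 0 < q := by linarith
  have hjordan := mul_le_sin (x := π * x / q) (by positivity)
    (by rw [div_le_div_iff₀ hq two_pos]; nlinarith [pi_pos])
  have hlower : 2 * x / q = 2 / π * (π * x / q) := by field_simp
  rw [← hlower] at hjordan
  calc 1 / sin (π * x / q) ≤ 1 / (2 * x / q) := one_div_le_one_div_of_le (by positivity) hjordan
    _ = q / (2 * x) := one_div_div _ _

lemma one_div_sin_pi_mul_div_le_add {x q : ℝ} (hx : 0 < x) (hxq : x < q) :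
    1 / sin (π * x / q) ≤ q / 2 * (1 / x + 1 / (q - x)) := by
  have hq : 0 < q := hx.trans hxq
  have hqx : 0 < q - x := sub_pos.mpr hxq
  rcases le_total (2 * x) q with h | h
  · calc 1 / sin (π * x / q) ≤ q / (2 * x) := one_div_sin_pi_mul_div_le hx h
      _ ≤ q / 2 * (1 / x + 1 / (q - x)) := by
        rw [mul_add, ← div_div, div_eq_mul_one_div (q / 2)]
        exact le_add_of_nonneg_right (mul_nonneg (by positivity) (one_div_nonneg.mpr hqx.le))
  · have hsym : sin (π * x / q) = sin (π * (q - x) / q) := by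
      rw [show π * (q - x) / q = π - π * x / q by field_simp, sin_pi_sub]
    calc 1 / sin (π * x / q) ≤ q / (2 * (q - x)) := by
          rw [hsym]; exact one_div_sin_pi_mul_div_le hqx (by linarith)
      _ ≤ q / 2 * (1 / x + 1 / (q - x)) := by
        rw [mul_add, ← div_div, div_eq_mul_one_div (q / 2) (q - x)]
        exact le_add_of_nonneg_left (by positivity)

/-- A bound for `|∑_{k=1}^X cos(2πmk/q)|`: trivial at `m = 0`, otherwise Jordan's inequality
applied to `1/sin(πm/q)`. -/
def cosSumBound (q X m : ℕ) : ℝ :=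
  if m = 0 then X else q / 2 * (1 / m + 1 / ((q : ℝ) - m))

lemma cosSumBound_nonneg {q X m : ℕ} (hm : m < q) : 0 ≤ cosSumBound q X m := by
  unfold cosSumBound
  split_ifs
  · positivity
  · have : (m : ℝ) < q := by exact_mod_cast hm
    have : 0 < (q : ℝ) - m := by linarith
    positivity

lemma abs_sum_cos_le_cosSumBound {q : ℕ} (hq : 0 < q) (n : ℤ) (X : ℕ) :
    |∑ k ∈ Icc 1 X, cos (2 * π * n / q * k)| ≤ cosSumBound q X (n % q).toNat := by
  set m := (n % q).toNat
  have hq' : (0 : ℝ) < q := by exact_mod_cast hq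
  have hm : (m : ℤ) = n % q := Int.toNat_of_nonneg (Int.emod_nonneg _ (by omega))
  have hmq : (m : ℝ) < q := by
    have : (m : ℤ) < q := hm ▸ Int.emod_lt_of_pos _ (by omega)
    exact_mod_cast this
  have hperiodic : ∀ k : ℕ, cos (2 * π * n / q * k) = cos (2 * π * m / q * k) := by
    intro k
    have hn : (n : ℝ) = m + q * (n / q : ℤ) := by
      have := Int.emod_add_mul_ediv n q
      rw [← hm] at this
      exact_mod_cast this.symm
    rw [hn, show 2 * π * (m + q * (n / q : ℤ)) / q * k
        = 2 * π * m / q * k + ((n / q * k : ℤ) : ℝ) * (2 * π) by push_cast; field_simp,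
      cos_add_int_mul_two_pi]
  simp only [hperiodic]
  unfold cosSumBound
  split_ifs with hm0
  · simp [hm0]
  · have hm_pos : (0 : ℝ) < m := by exact_mod_cast Nat.pos_of_ne_zero hm0
    have hsin_pos : 0 < sin (2 * π * m / q / 2) := by
      apply sin_pos_of_pos_of_lt_pi (by positivity)
      rw [div_div, div_lt_iff₀ (by positivity)]
      nlinarith [pi_pos]
    calc _ ≤ 1 / |sin (2 * π * m / q / 2)| := abs_sum_Icc_cos_mul_le hsin_pos.ne' X
      _ = 1 / sin (π * m / q) := by rw [abs_of_pos hsin_pos]; ring_nf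
      _ ≤ _ := one_div_sin_pi_mul_div_le_add hm_pos hmq

lemma cosSumBound_mono_left (q m : ℕ) : Monotone fun X => cosSumBound q X m := by
  intro X Y hXY
  simp only [cosSumBound]
  split_ifs
  · exact_mod_cast hXY
  · exact le_rfl

lemma two_pi_mul_div_le_pi_div {a t k : ℕ} (hk : k ≤ t / 2) :
    2 * π * k / (a * t) ≤ π / a := by
  have hkt : (2 * k : ℝ) ≤ t := by exact_mod_cast (by omega : 2 * k ≤ t)
  calc 2 * π * k / (a * t) = 2 * k / t * (π / a) := by ring
    _ ≤ 1 * (π / a) := by gcongr; exact div_le_one_of_le₀ hkt (Nat.cast_nonneg t)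
    _ = π / a := one_mul _

lemma abs_sum_cos_sub_one_mul_cos_le {a t : ℕ} (ha : 0 < a) (ht : 0 < t) (n : ℤ) :
    |∑ k ∈ Icc 1 (t / 2), (cos (2 * π * k / (a * t)) - 1) * cos (2 * π * n / (a * t) * k)|
      ≤ π ^ 2 / a ^ 2 * cosSumBound (a * t) (t / 2) (n % (a * t : ℕ)).toNat := by
  have hpi_div_le_pi : π / a ≤ π := div_le_self pi_pos.le (by exact_mod_cast ha)
  have hmono : MonotoneOn (fun k : ℕ => 1 - cos (2 * π * k / (a * t))) (Set.Icc 1 (t / 2)) := by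
    intro k _ l hl hkl
    apply sub_le_sub_left (cos_le_cos_of_nonneg_of_le_pi (by positivity)
      ((two_pi_mul_div_le_pi_div hl.2).trans hpi_div_le_pi) _)
    gcongr
  have hgM : 1 - cos (2 * π * (t / 2 : ℕ) / (a * t)) ≤ π ^ 2 / (2 * a ^ 2) := by
    have hx := two_pi_mul_div_le_pi_div (a := a) (le_refl (t / 2))
    have hx0 : 0 ≤ 2 * π * (t / 2 : ℕ) / (a * t) := by positivity
    calc _ ≤ (2 * π * (t / 2 : ℕ) / (a * t)) ^ 2 / 2 := by
          linarith [one_sub_sq_div_two_le_cos (x := 2 * π * (t / 2 : ℕ) / (a * t))]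
      _ ≤ (π / a) ^ 2 / 2 := by gcongr
      _ = π ^ 2 / (2 * a ^ 2) := by ring
  have hu : ∀ X ≤ t / 2, |∑ k ∈ Icc 1 X, cos (2 * π * n / (a * t) * k)|
      ≤ cosSumBound (a * t) (t / 2) (n % (a * t : ℕ)).toNat := by
    intro X hX
    have h := abs_sum_cos_le_cosSumBound (Nat.mul_pos ha ht) n X
    push_cast at h
    exact h.trans (cosSumBound_mono_left _ _ hX)
  have habel := abs_sum_Icc_mul_le_of_monotoneOn (by positivity) hmono
    (sub_nonneg.mpr (cos_le_one _)) hgM hu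
  calc _ = |∑ k ∈ Icc 1 (t / 2),
        (1 - cos (2 * π * k / (a * t))) * cos (2 * π * n / (a * t) * k)| := by
        rw [← abs_neg, ← sum_neg_distrib]; congr 1; refine sum_congr rfl fun k _ => by ring
    _ ≤ _ := habel.trans_eq (by ring)

lemma existsUnique_mem_Ires_modEq {a : ℕ} (ha : 0 < a) (x : ℤ) :
    ∃! r, r ∈ Ires a ∧ x ≡ r [ZMOD a] := by
  have hsize : (((a - 1) / 2 : ℕ) : ℤ) + ((a / 2 : ℕ) : ℤ) + 1 = a := by omega
  set L : ℤ := (((a - 1) / 2 : ℕ) : ℤ)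
  have hmem_iff : ∀ r, r ∈ Ires a ↔ -L ≤ r ∧ r ≤ ((a / 2 : ℕ) : ℤ) := fun r => mem_Icc
  have hmem : (x + L) % a - L ∈ Ires a := by
    have := Int.emod_nonneg (x + L) (by omega : (a : ℤ) ≠ 0)
    have := Int.emod_lt_of_pos (x + L) (by omega : (0 : ℤ) < a)
    rw [hmem_iff]
    omega
  have hx : x ≡ (x + L) % a - L [ZMOD a] := by
    simpa using ((Int.mod_modEq (x + L) a).sub_right L).symm
  refine ⟨_, ⟨hmem, hx⟩, fun r ⟨hr, hxr⟩ => ?_⟩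
  have hdiff : |r - ((x + L) % a - L)| < a := by
    rw [hmem_iff] at hr hmem
    rw [abs_lt]
    omega
  exact sub_eq_zero.mp (Int.eq_zero_of_abs_lt_dvd (hx.symm.trans hxr).dvd hdiff)

lemma sum_Ires_ite_emod_eq {a : ℕ} (ha : 0 < a) (x : ℤ) (F : ℤ → ℝ)
    (hF : ∀ r, x ≡ r [ZMOD a] → F r = F x) :
    ∑ r ∈ Ires a, (if x % a = r % a then F r else 0) = F x := by
  obtain ⟨r₀, ⟨hr₀, hxr₀⟩, huniq⟩ := existsUnique_mem_Ires_modEq ha x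
  calc _ = if x % a = r₀ % a then F r₀ else 0 :=
        sum_eq_single_of_mem r₀ hr₀ fun r hr hne => if_neg fun hxr => hne (huniq r ⟨hr, hxr⟩)
    _ = F x := by rw [if_pos (show x % a = r₀ % a from hxr₀), hF r₀ hxr₀]

lemma cos_two_pi_mul_div_eq_of_modEq {a : ℕ} (ha : 0 < a) (s : ℕ) {x y : ℤ}
    (hxy : x ≡ y [ZMOD a]) : cos (2 * π * y * s / a) = cos (2 * π * x * s / a) := by
  obtain ⟨q, hq⟩ := hxy.dvd
  have hy : (y : ℝ) = x + a * q := by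
    have : y = x + a * q := by linarith
    exact_mod_cast this
  rw [hy, show 2 * π * (x + a * q) * s / a = 2 * π * x * s / a + ((q * s : ℤ) : ℝ) * (2 * π) by
    push_cast; field_simp, cos_add_int_mul_two_pi]

lemma sum_cos_mul_Sigma1_eq (a t s : ℕ) (ha : 0 < a) (ht : 0 < t) (j : ℤ) :
    ∑ r ∈ Ires a, cos (2 * π * r * s / a) * Sigma1 a t j r
      = ∑ k ∈ Icc 1 (t / 2), (cos (2 * π * k / (a * t)) - 1) *
          (cos (2 * π * (s * t + j * a : ℤ) / (a * t) * k)
            + cos (2 * π * (s * t - j * a : ℤ) / (a * t) * k)) := by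
  simp only [Sigma1, sum_filter, mul_sum, mul_ite, mul_zero]
  rw [sum_comm]
  refine sum_congr rfl fun k _ => ?_
  rw [sum_Ires_ite_emod_eq ha k _ fun r hkr => by rw [cos_two_pi_mul_div_eq_of_modEq ha s hkr]]
  have ha' : (a : ℝ) ≠ 0 := by positivity
  have ht' : (t : ℝ) ≠ 0 := by positivity
  rw [show 2 * π * (s * t + j * a : ℤ) / (a * t) * k = 2 * π * k * s / a + 2 * π * j * k / t by
      push_cast; field_simp,
    show 2 * π * (s * t - j * a : ℤ) / (a * t) * k = 2 * π * k * s / a - 2 * π * j * k / t by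
      push_cast; field_simp,
    cos_add, cos_sub]
  push_cast
  ring

lemma sum_comp_le_mul_sum {ι κ : Type*} [DecidableEq κ] {s : Finset ι} {t : Finset κ}
    {ψ : ι → κ} {F : κ → ℝ} {n : ℕ} (hψ : ∀ i ∈ s, ψ i ∈ t) (hF : ∀ y ∈ t, 0 ≤ F y)
    (hfiber : ∀ y ∈ t, #{i ∈ s | ψ i = y} ≤ n) :
    ∑ i ∈ s, F (ψ i) ≤ n * ∑ y ∈ t, F y := by
  rw [← sum_fiberwise_of_maps_to hψ, mul_sum]
  refine sum_le_sum fun y hy => ?_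
  rw [sum_congr rfl fun i hi => by rw [(mem_filter.mp hi).2], sum_const, nsmul_eq_mul]
  exact mul_le_mul_of_nonneg_right (by exact_mod_cast hfiber y hy) (hF y hy)

lemma card_le_two_of_subset_IresSym {t : ℕ} {s : Finset ℤ} (hs : s ⊆ IresSym t)
    (hmod : ∀ i ∈ s, ∀ j ∈ s, i ≡ j [ZMOD t]) : #s ≤ 2 := by
  rcases s.eq_empty_or_nonempty with rfl | hne
  · simp
  set x := s.min' hne
  suffices s ⊆ {x, x + t} from (card_le_card this).trans card_le_two
  intro y hy
  have hxy : x ≤ y := s.min'_le y hy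
  have hwidth : y - x ≤ t := by
    have hx := mem_Icc.mp (hs (s.min'_mem hne))
    have hy := mem_Icc.mp (hs hy)
    omega
  rcases hwidth.eq_or_lt with h | h
  · exact mem_insert_of_mem (mem_singleton.mpr (by omega))
  · have := Int.eq_zero_of_dvd_of_nonneg_of_lt (sub_nonneg.mpr hxy) h
      (hmod x (s.min'_mem hne) y hy).dvd
    exact mem_insert.mpr (Or.inl (by omega))

lemma sum_IresSym_cosSumBound_le {a t : ℕ} (ha : 0 < a) (ht : 0 < t) (c b : ℤ) (hb : |b| = a) :
    ∑ j ∈ IresSym t, cosSumBound (a * t) (t / 2) ((c + j * b) % (a * t : ℕ)).toNat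
      ≤ 2 * ∑ m ∈ range (a * t), cosSumBound (a * t) (t / 2) m := by
  have hq : (0 : ℤ) < (a * t : ℕ) := by positivity
  have hres : ∀ j : ℤ, (((c + j * b) % (a * t : ℕ)).toNat : ℤ) = (c + j * b) % (a * t : ℕ) :=
    fun j => Int.toNat_of_nonneg (Int.emod_nonneg _ hq.ne')
  refine sum_comp_le_mul_sum (fun j _ => ?_) (fun m hm => cosSumBound_nonneg (mem_range.mp hm))
    fun m _ => card_le_two_of_subset_IresSym (filter_subset _ _) fun i hi j hj => ?_
  · have := Int.emod_lt_of_pos (c + j * b) hq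
    have := hres j
    exact mem_range.mpr (by omega)
  · have hij : (c + i * b) % (a * t : ℕ) = (c + j * b) % (a * t : ℕ) := by
      rw [← hres i, ← hres j, (mem_filter.mp hi).2.trans (mem_filter.mp hj).2.symm]
    have hdvd : ((a * t : ℕ) : ℤ) ∣ |j - i| * a := by
      rw [← hb, ← abs_mul, dvd_abs, show (j - i) * b = c + j * b - (c + i * b) by ring]
      exact Int.ModEq.dvd hij
    push_cast at hdvd
    rw [mul_comm (a : ℤ) t] at hdvd
    exact Int.modEq_of_dvd ((dvd_abs _ _).mp
      ((mul_dvd_mul_iff_right (by exact_mod_cast ha.ne' : (a : ℤ) ≠ 0)).mp hdvd))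

lemma sum_range_cosSumBound_le (q X : ℕ) :
    ∑ m ∈ range q, cosSumBound q X m ≤ X + q * (1 + log q) := by
  obtain _ | n := q
  · simp
  have hharmonic : ∑ i ∈ range n, 1 / ((i + 1 : ℕ) : ℝ) ≤ 1 + log (n + 1 : ℕ) := by
    have h := harmonic_le_one_add_log n
    simp only [harmonic, Rat.cast_sum, Rat.cast_inv, Rat.cast_natCast] at h
    simp only [one_div]
    have hlog_mono : log n ≤ log (n + 1 : ℕ) := by
      rcases n.eq_zero_or_pos with rfl | hn
      · simp
      · exact log_le_log (by positivity) (by push_cast; linarith)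
    linarith
  have hreflect : ∑ i ∈ range n, 1 / (((n + 1 : ℕ) : ℝ) - (i + 1 : ℕ))
      = ∑ i ∈ range n, 1 / ((i + 1 : ℕ) : ℝ) := by
    rw [← sum_range_reflect (fun i => 1 / ((i + 1 : ℕ) : ℝ)) n]
    refine sum_congr rfl fun i hi => ?_
    have hi := mem_range.mp hi
    rw [show n - 1 - i + 1 = n - i by omega, Nat.cast_sub hi.le]
    push_cast; ring
  rw [sum_range_succ']
  simp only [cosSumBound, Nat.add_one_ne_zero, if_false, if_true, ← mul_sum, sum_add_distrib,
    hreflect]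
  have hq : (0 : ℝ) ≤ (n + 1 : ℕ) := Nat.cast_nonneg _
  nlinarith [mul_le_mul_of_nonneg_left hharmonic hq]

lemma sum_abs_sum_cos_mul_Sigma1_le {a t : ℕ} (ha : 0 < a) (ht : 0 < t) (s : ℕ) :
    1 / (t : ℝ) * ∑ j ∈ IresSym t, |∑ r ∈ Ires a, cos (2 * π * r * s / a) * Sigma1 a t j r|
      ≤ 8 * π ^ 2 * (1 + log (a * t)) / a := by
  set w : ℤ → ℝ := fun n => cosSumBound (a * t) (t / 2) (n % (a * t : ℕ)).toNat
  set W := ∑ m ∈ range (a * t), cosSumBound (a * t) (t / 2) m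
  have hj : ∀ j, |∑ r ∈ Ires a, cos (2 * π * r * s / a) * Sigma1 a t j r|
      ≤ π ^ 2 / a ^ 2 * (w (s * t + j * a) + w (s * t - j * a)) := fun j => by
    rw [sum_cos_mul_Sigma1_eq a t s ha ht j]
    simp only [mul_add, sum_add_distrib]
    exact (abs_add_le _ _).trans (add_le_add (abs_sum_cos_sub_one_mul_cos_le ha ht _)
      (abs_sum_cos_sub_one_mul_cos_le ha ht _))
  have hplus : ∑ j ∈ IresSym t, w (s * t + j * a) ≤ 2 * W :=
    sum_IresSym_cosSumBound_le ha ht _ _ (abs_of_nonneg (Nat.cast_nonneg a))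
  have hminus : ∑ j ∈ IresSym t, w (s * t - j * a) ≤ 2 * W := by
    simpa only [sub_eq_add_neg, mul_neg] using
      sum_IresSym_cosSumBound_le ha ht (s * t) (-a) (by rw [abs_neg, Nat.abs_cast])
  have hW : W ≤ t + a * t * (1 + log (a * t)) := by
    have h := sum_range_cosSumBound_le (a * t) (t / 2)
    have ht2 : ((t / 2 : ℕ) : ℝ) ≤ t := by exact_mod_cast Nat.div_le_self t 2
    push_cast at h
    linarith
  have ha' : (1 : ℝ) ≤ a := by exact_mod_cast ha
  have ht' : (1 : ℝ) ≤ t := by exact_mod_cast ht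
  have hlog : 0 ≤ log (a * t) := log_nonneg (by nlinarith)
  calc _ ≤ 1 / (t : ℝ) * (π ^ 2 / a ^ 2 * (2 * W + 2 * W)) := by
        gcongr
        calc _ ≤ ∑ j ∈ IresSym t, π ^ 2 / a ^ 2 * (w (s * t + j * a) + w (s * t - j * a)) :=
              sum_le_sum fun j _ => hj j
          _ = π ^ 2 / a ^ 2 * (∑ j ∈ IresSym t, w (s * t + j * a)
                + ∑ j ∈ IresSym t, w (s * t - j * a)) := by rw [← mul_sum, sum_add_distrib]
          _ ≤ _ := by gcongr
    _ ≤ 1 / (t : ℝ) * (π ^ 2 / a ^ 2 * (4 * (t + a * t * (1 + log (a * t))))) := by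
        gcongr; linarith
    _ = 4 * π ^ 2 * (1 + a * (1 + log (a * t))) / a ^ 2 := by field_simp
    _ ≤ 4 * π ^ 2 * (2 * a * (1 + log (a * t))) / a ^ 2 := by gcongr; nlinarith
    _ = 8 * π ^ 2 * (1 + log (a * t)) / a := by field_simp; ring

lemma isBigO_one_add_log_mul_rpow {f g : ℕ → ℕ} (hf₀ : ∀ N, 0 < f N) (hg₀ : ∀ N, 0 < g N)
    (hf : (fun N => (f N : ℝ)) =O[atTop] (fun N => (N : ℝ)))
    (hg : (fun N => (g N : ℝ)) =O[atTop] (fun N => (N : ℝ))) {ε : ℝ} (hε : 0 < ε) :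
    (fun N => 1 + log ((f N : ℝ) * g N)) =O[atTop] (fun N => (N : ℝ) ^ ε) := by
  obtain ⟨c, hc, hfg⟩ := (hf.mul hg).exists_pos
  have hlog_le_rpow := ((isLittleO_log_rpow_atTop hε).comp_tendsto
    tendsto_natCast_atTop_atTop).bound one_pos
  refine IsBigO.of_bound (3 + |log c|) ?_
  filter_upwards [hfg.bound, hlog_le_rpow, eventually_ge_atTop 1] with N hN hlogN hN1
  have hN1' : (1 : ℝ) ≤ N := by exact_mod_cast hN1
  have hfg_one : (1 : ℝ) ≤ f N * g N := by exact_mod_cast Nat.mul_pos (hf₀ N) (hg₀ N)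
  have hrpow : 1 ≤ (N : ℝ) ^ ε := one_le_rpow hN1' hε.le
  simp only [Function.comp, norm_mul, norm_eq_abs, one_mul] at hN hlogN
  rw [abs_of_nonneg (log_nonneg hN1'), abs_of_nonneg (by positivity)] at hlogN
  have hlog_fg : log ((f N : ℝ) * g N) ≤ log c + 2 * log N := by
    calc _ ≤ log (c * (N * N)) := log_le_log (by linarith) (by simpa using hN)
      _ = log c + 2 * log N := by
        have hN0 : (N : ℝ) ≠ 0 := by positivity
        rw [log_mul hc.ne' (mul_ne_zero hN0 hN0), log_mul hN0 hN0]
        ring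
  rw [norm_of_nonneg (by linarith [log_nonneg hfg_one]), norm_of_nonneg (by positivity)]
  nlinarith [le_abs_self (log c), abs_nonneg (log c)]

theorem statement2_general (a t : ℕ → ℕ)
    (hapos : ∀ N, 0 < a N) (htpos : ∀ N, 0 < t N)
    (haN : (fun N => (a N : ℝ)) =O[atTop] (fun N => (N : ℝ)))
    (htN : (fun N => (t N : ℝ)) =O[atTop] (fun N => (N : ℝ)))
    (ε : ℝ) (hε : 0 < ε) :
    (fun N => (1 / (t N : ℝ)) * ∑ j ∈ IresSym (t N),
        |∑ r ∈ Ires (a N),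
          Real.cos (2 * Real.pi * (r : ℝ) * (invMod (t N) (a N) : ℝ) / (a N : ℝ)) *
            Sigma1 (a N) (t N) j r|)
      =O[atTop] (fun N => (N : ℝ) ^ ε / (a N : ℝ)) := by
  refine (isBigO_of_le' (g := fun N => (1 + log ((a N : ℝ) * t N)) / a N) (c := 8 * π ^ 2)
    atTop fun N => ?_).trans ?_
  · have hlog : 0 ≤ 1 + log ((a N : ℝ) * t N) :=
      add_nonneg zero_le_one (log_nonneg (by exact_mod_cast Nat.mul_pos (hapos N) (htpos N)))
    rw [norm_of_nonneg (mul_nonneg (by positivity) (sum_nonneg fun _ _ => abs_nonneg _)),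
      norm_of_nonneg (by positivity)]
    exact (sum_abs_sum_cos_mul_Sigma1_le (hapos N) (htpos N) _).trans_eq (by ring)
  · simpa only [div_eq_mul_inv] using (isBigO_one_add_log_mul_rpow hapos htpos haN htN hε).mul
      (isBigO_refl (fun N => (a N : ℝ)⁻¹) atTop)

theorem statement2 (a t : ℕ → ℕ)
    (hapos : ∀ N, 0 < a N) (htpos : ∀ N, 0 < t N)
    (hcop : ∀ N, Nat.Coprime (a N) (t N))
    (haN : (fun N => (a N : ℝ)) =O[atTop] (fun N => (N : ℝ)))
    (htN : (fun N => (t N : ℝ)) =O[atTop] (fun N => (N : ℝ)))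
    (hao : (fun N => (a N : ℝ)) =o[atTop] (fun N => (t N : ℝ)))
    (ε : ℝ) (hε : 0 < ε) :
    (fun N => (1 / (t N : ℝ)) * ∑ j ∈ IresSym (t N),
        |∑ r ∈ Ires (a N),
          Real.cos (2 * Real.pi * (r : ℝ) * (invMod (t N) (a N) : ℝ) / (a N : ℝ)) *
            Sigma1 (a N) (t N) j r|)
      =O[atTop] (fun N => (N : ℝ) ^ ε / (a N : ℝ)) :=
  statement2_general a t hapos htpos haN htN ε hε
end
end

section
/- Let a = a(N), t = t(N) be positive integers with (a,t) = 1, a ≪ N, t ≪ N, and a = o(t) as N → ∞. Then Σ_{0≤|r|≤a/2} sin(2πr·t̄/a) · Σ₂(0,r) ≪ 1, with an absolute implied constant. -/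
open Finset Filter Asymptotics

noncomputable section

/-!
Each `k ≤ t/2` lies in exactly one residue class `r ∈ Ires a`, and `sin (2π r t̄ / a)` depends
only on that class, so the double sum collapses to `2 ∑_{k ≤ t/2} sin (2πk/(at)) sin (2πk t̄/a)`.
If `a ∣ t̄` every term vanishes. Otherwise the partial sums of `sin (2πk t̄/a)` are at most
`1 / |sin (π t̄/a)| ≤ a/2`, while `sin (2πk/(at))` increases with `k` up to at most `π/a`, so Abel
summation bounds the sum by `2π`, uniformly in `N`.
-/

open Real

lemma abs_sum_range_sin_nat_mul_le {θ : ℝ} (h : sin (θ / 2) ≠ 0) (n : ℕ) :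
    |∑ k ∈ range n, sin (k * θ)| ≤ 1 / |sin (θ / 2)| := by
  set u : ℕ → ℝ := fun k => cos ((k - 1 / 2) * θ)
  have telescope : 2 * sin (θ / 2) * ∑ k ∈ range n, sin (k * θ) = u 0 - u n := by
    rw [mul_sum, ← sum_range_sub' u]
    refine sum_congr rfl fun k _ => ?_
    rw [two_mul_sin_mul_sin, ← cos_neg]
    simp only [u]
    push_cast
    ring_nf
  rw [le_div_iff₀ (abs_pos.2 h), ← mul_le_mul_iff_right₀ (two_pos (α := ℝ))]
  calc 2 * (|∑ k ∈ range n, sin (k * θ)| * |sin (θ / 2)|)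
      = |u 0 - u n| := by rw [← telescope, abs_mul, abs_mul, abs_two]; ring
    _ ≤ |u 0| + |u n| := abs_sub _ _
    _ ≤ 1 + 1 := add_le_add (abs_cos_le_one _) (abs_cos_le_one _)
    _ = 2 * 1 := by norm_num

lemma two_div_le_abs_sin_pi_mul_div {a c : ℤ} (hc : ¬ a ∣ c) :
    2 / |(a : ℝ)| ≤ |sin (π * c / a)| := by
  rcases eq_or_ne a 0 with rfl | ha
  · simp
  have ha : (a : ℝ) ≠ 0 := by exact_mod_cast ha
  -- Rounding `c / a` to the nearest integer `n` puts `π (c / a - n)` in the range of Jordan's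
  -- inequality, while `n ≠ c / a` keeps it at least `π / |a|` away from `0`.
  set n := round ((c : ℝ) / a)
  have hdist : 1 ≤ |(c : ℝ) - n * a| := by
    have : c - n * a ≠ 0 := fun h => hc ⟨n, by linarith⟩
    exact_mod_cast Int.one_le_abs this
  have hx : π * c / a - n * π = π * ((c - n * a) / a) := by field_simp
  have hround : |((c : ℝ) - n * a) / a| ≤ 1 / 2 := by
    rw [show ((c : ℝ) - n * a) / a = c / a - n by field_simp]; exact abs_sub_round _
  calc 2 / |(a : ℝ)| ≤ 2 / π * |π * ((c - n * a) / a)| := by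
        rw [abs_mul, abs_div, abs_of_pos pi_pos]
        field_simp
        exact hdist
    _ ≤ |sin (π * ((c - n * a) / a))| := by
        apply mul_abs_le_abs_sin
        rw [abs_mul, abs_of_pos pi_pos]
        nlinarith [pi_pos]
    _ = |sin (π * c / a)| := by
        rw [← hx, sin_sub_int_mul_pi, abs_mul, abs_neg_one_zpow, one_mul]

lemma abs_sum_range_mul_le_of_monotoneOn {f g : ℕ → ℝ} {M : ℝ} (n : ℕ)
    (hf : MonotoneOn f (Set.Iic n)) (hf0 : 0 ≤ f 0)
    (hg : ∀ m, |∑ i ∈ range m, g i| ≤ M) :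
    |∑ i ∈ range (n + 1), f i * g i| ≤ 2 * M * f n := by
  have step : ∀ i ∈ range n, |(f (i + 1) - f i) • ∑ j ∈ range (i + 1), g j|
      ≤ (f (i + 1) - f i) * M := by
    intro i hi
    have hi : i < n := mem_range.1 hi
    have : f i ≤ f (i + 1) := hf (Set.mem_Iic.2 (by omega)) (Set.mem_Iic.2 hi) (by omega)
    rw [smul_eq_mul, abs_mul, abs_of_nonneg (sub_nonneg.2 this)]
    exact mul_le_mul_of_nonneg_left (hg _) (sub_nonneg.2 this)
  have hfn : 0 ≤ f n := hf0.trans (hf (Set.mem_Iic.2 n.zero_le) (Set.mem_Iic.2 le_rfl) n.zero_le)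
  simp only [← smul_eq_mul (a := f _)]
  rw [sum_range_by_parts, Nat.add_sub_cancel]
  calc _ ≤ |f n • ∑ j ∈ range (n + 1), g j|
        + |∑ i ∈ range n, (f (i + 1) - f i) • ∑ j ∈ range (i + 1), g j| := abs_sub _ _
    _ ≤ f n * M + ∑ i ∈ range n, (f (i + 1) - f i) * M := by
        gcongr
        · rw [smul_eq_mul, abs_mul, abs_of_nonneg hfn]
          exact mul_le_mul_of_nonneg_left (hg _) hfn
        · exact (abs_sum_le_sum_abs _ _).trans (sum_le_sum step)
    _ = f n * M + (f n - f 0) * M := by rw [← sum_mul, sum_range_sub (f := f)]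
    _ ≤ 2 * M * f n := by nlinarith [(abs_nonneg _).trans (hg 0)]

lemma card_filter_Ires_emod_eq {a : ℕ} (ha : 0 < a) (k : ℤ) :
    #{r ∈ Ires a | r % a = k % a} = 1 := by
  obtain ⟨r₀, hr₀, hr₀k⟩ : ∃ r₀ ∈ Ires a, r₀ % a = k % a := by
    have h0 : 0 ≤ k % a := Int.emod_nonneg _ (by omega)
    have h1 : k % a < a := Int.emod_lt_of_pos _ (by omega)
    refine ⟨if k % a ≤ (a / 2 : ℕ) then k % a else k % a - a, ?_, ?_⟩
    · simp only [Ires, mem_Icc]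
      split_ifs <;> omega
    · split_ifs
      · exact Int.emod_emod_of_dvd _ dvd_rfl
      · rw [Int.sub_emod_right, Int.emod_emod_of_dvd _ dvd_rfl]
  refine card_eq_one.2
    ⟨r₀, eq_singleton_iff_unique_mem.2 ⟨mem_filter.2 ⟨hr₀, hr₀k⟩, fun r hr => ?_⟩⟩
  obtain ⟨hr, hrk⟩ := mem_filter.1 hr
  have hdvd : (a : ℤ) ∣ r - r₀ := Int.ModEq.dvd (hr₀k.trans hrk.symm)
  simp only [Ires, mem_Icc] at hr hr₀
  have := Int.eq_zero_of_abs_lt_dvd hdvd (by rw [abs_lt]; constructor <;> omega)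
  omega

lemma sin_two_pi_mul_mul_div_eq_of_emod_eq {a : ℕ} {r k : ℤ} (h : r % a = k % a) (c : ℕ) :
    sin (2 * π * r * c / a) = sin (2 * π * k * c / a) := by
  rcases eq_or_ne a 0 with rfl | ha
  · simp
  obtain ⟨m, hm⟩ := Int.ModEq.dvd h.symm
  have hr : (r : ℝ) = k + a * m := by rw [← Int.cast_natCast, ← Int.cast_mul, ← hm]; push_cast; ring
  rw [hr, show 2 * π * (k + a * m) * c / a = 2 * π * k * c / a + (m * c : ℤ) * (2 * π) by
    push_cast; field_simp, sin_add_int_mul_two_pi]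

lemma sin_two_pi_mul_mul_div_eq_zero_of_dvd {a c : ℕ} (h : a ∣ c) (r : ℤ) :
    sin (2 * π * r * c / a) = 0 := by
  obtain ⟨m, rfl⟩ := h
  rcases eq_or_ne a 0 with rfl | ha
  · simp
  rw [show 2 * π * r * (a * m : ℕ) / a = (2 * r * m : ℤ) * π by push_cast; field_simp,
    sin_int_mul_pi]

lemma sum_Ires_sin_mul_Sigma2_eq {a : ℕ} (ha : 0 < a) (t c : ℕ) :
    ∑ r ∈ Ires a, sin (2 * π * r * c / a) * Sigma2 a t 0 r
      = 2 * ∑ k ∈ range (t / 2 + 1), sin (2 * π * k / (a * t)) * sin (2 * π * k * c / a) := by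
  set F : ℕ → ℝ := fun k => 2 * (sin (2 * π * k / (a * t)) * sin (2 * π * k * c / a))
  have hfiber : ∀ r ∈ Ires a, sin (2 * π * r * c / a) * Sigma2 a t 0 r
      = ∑ k ∈ Icc 1 (t / 2) with ((k : ℕ) : ℤ) % a = r % a, F k := by
    intro r _
    rw [Sigma2, mul_left_comm, mul_sum, mul_sum]
    refine sum_congr rfl fun k hk => ?_
    rw [sin_two_pi_mul_mul_div_eq_of_emod_eq (mem_filter.1 hk).2.symm]
    simp only [F, Int.cast_natCast, Int.cast_zero, mul_zero, zero_mul, zero_div, cos_zero]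
    ring
  rw [sum_congr rfl hfiber, sum_comm' (t' := Icc 1 (t / 2))
    (s' := fun k : ℕ => {r ∈ Ires a | r % a = (k : ℤ) % a}) (fun r k => by
      simp only [mem_filter, eq_comm (a := (k : ℤ) % a)]; tauto)]
  simp only [sum_const, card_filter_Ires_emod_eq ha, one_smul]
  rw [mul_sum, range_eq_Ico, sum_eq_sum_Ico_succ_bot (by omega), zero_add,
    Ico_add_one_right_eq_Icc]
  simp only [F, Nat.cast_zero, mul_zero, zero_div, sin_zero, zero_mul, zero_add]

lemma abs_sum_range_sin_mul_sin_le {a c : ℕ} (hc : ¬ a ∣ c) (t : ℕ) :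
    |∑ k ∈ range (t / 2 + 1), sin (2 * π * k / (a * t)) * sin (2 * π * k * c / a)| ≤ π := by
  rcases eq_or_ne a 0 with rfl | ha0
  · simp [pi_pos.le]
  have ha : (2 : ℝ) ≤ a := by
    have : a ≠ 1 := by rintro rfl; exact hc (one_dvd c)
    exact_mod_cast (show 2 ≤ a by omega)
  have hsin : 2 / (a : ℝ) ≤ |sin (2 * π * c / a / 2)| := by
    have := two_div_le_abs_sin_pi_mul_div (a := a) (c := c) (by exact_mod_cast hc)
    rw [Int.cast_natCast, Int.cast_natCast, Nat.abs_cast] at this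
    convert this using 3
    ring
  have hg : ∀ m, |∑ k ∈ range m, sin (2 * π * k * c / a)| ≤ a / 2 := by
    intro m
    have hpos : (0 : ℝ) < 2 / a := by positivity
    calc |∑ k ∈ range m, sin (2 * π * k * c / a)|
        = |∑ k ∈ range m, sin (k * (2 * π * c / a))| := by congr! 3; ring
      _ ≤ 1 / |sin (2 * π * c / a / 2)| :=
          abs_sum_range_sin_nat_mul_le (fun h => by rw [h, abs_zero] at hsin; linarith) m
      _ ≤ 1 / (2 / a) := one_div_le_one_div_of_le hpos hsin
      _ = a / 2 := by field_simp
  have harg : ∀ k ≤ t / 2, 0 ≤ 2 * π * k / (a * t) ∧ 2 * π * k / (a * t) ≤ π / a := by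
    intro k hk
    refine ⟨by positivity, ?_⟩
    rcases eq_or_ne t 0 with rfl | ht
    · rw [Nat.cast_zero, mul_zero, div_zero]
      positivity
    rw [div_le_div_iff₀ (by positivity) (by positivity)]
    have : (2 * k : ℝ) ≤ t := by exact_mod_cast (show 2 * k ≤ t by omega)
    have := mul_le_mul_of_nonneg_left this (by positivity : (0 : ℝ) ≤ π * a)
    linarith
  have hπa : π / a ≤ π / 2 := div_le_div_of_nonneg_left pi_pos.le two_pos ha
  have hf : MonotoneOn (fun k : ℕ => sin (2 * π * k / (a * t))) (Set.Iic (t / 2)) := by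
    intro i hi j hj hij
    obtain ⟨hi0, hi1⟩ := harg i hi
    obtain ⟨hj0, hj1⟩ := harg j hj
    refine sin_le_sin_of_le_of_le_pi_div_two (by linarith [pi_pos]) (by linarith) ?_
    gcongr
  have hfn : sin (2 * π * (t / 2 : ℕ) / (a * t)) ≤ π / a :=
    (sin_le (harg _ le_rfl).1).trans (harg _ le_rfl).2
  calc _ ≤ 2 * (a / 2) * sin (2 * π * (t / 2 : ℕ) / (a * t)) :=
        abs_sum_range_mul_le_of_monotoneOn _ hf (by simp) hg
    _ ≤ 2 * (a / 2) * (π / a) := by gcongr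
    _ = π := by field_simp

lemma abs_sum_Ires_sin_mul_Sigma2_le (a t c : ℕ) :
    |∑ r ∈ Ires a, sin (2 * π * r * c / a) * Sigma2 a t 0 r| ≤ 2 * π := by
  rcases Nat.eq_zero_or_pos a with rfl | ha
  · simp [Ires, pi_pos.le]
  by_cases hc : a ∣ c
  · simp [sin_two_pi_mul_mul_div_eq_zero_of_dvd hc, pi_pos.le]
  rw [sum_Ires_sin_mul_Sigma2_eq ha, abs_mul, abs_two]
  linarith [abs_sum_range_sin_mul_sin_le hc t]

theorem statement5_general (a t : ℕ → ℕ) :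
    (fun N => ∑ r ∈ Ires (a N),
        Real.sin (2 * Real.pi * (r : ℝ) * (invMod (t N) (a N) : ℝ) / (a N : ℝ)) *
          Sigma2 (a N) (t N) 0 r)
      =O[atTop] (fun _ => (1 : ℝ)) :=
  isBigO_of_le' (c := 2 * π) _ fun N => by
    simpa using abs_sum_Ires_sin_mul_Sigma2_le (a N) (t N) (invMod (t N) (a N))

theorem statement5 (a t : ℕ → ℕ)
    (hapos : ∀ N, 0 < a N) (htpos : ∀ N, 0 < t N)
    (hcop : ∀ N, Nat.Coprime (a N) (t N))
    (haN : (fun N => (a N : ℝ)) =O[atTop] (fun N => (N : ℝ)))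
    (htN : (fun N => (t N : ℝ)) =O[atTop] (fun N => (N : ℝ)))
    (hao : (fun N => (a N : ℝ)) =o[atTop] (fun N => (t N : ℝ))) :
    (fun N => ∑ r ∈ Ires (a N),
        Real.sin (2 * Real.pi * (r : ℝ) * (invMod (t N) (a N) : ℝ) / (a N : ℝ)) *
          Sigma2 (a N) (t N) 0 r)
      =O[atTop] (fun _ => (1 : ℝ)) :=
  statement5_general a t
end
end

section
/- Let a, t be integers with 2 ≤ a ≤ t and (a,t) = 1, and let j be an integer with t ∤ j. Then | Σ_{0≤|r|≤a/2} cos(2πr·t̄/a)·cos(2πjr/t) | · | 2·Σ_{J≤t/(2a)} ( cos(2πJ/t) − 1 )·cos(2πjaJ/t) | ≪ (1/a)·(1/‖ja/t‖), with an absolute implied constant. -/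
open Finset

noncomputable section

/-- The distance from a real number to the nearest integer, `‖α‖ = min_{n ∈ ℤ} |α - n|`. -/
def dist2int (x : ℝ) : ℝ := |x - round x|

/-!
The first factor is at most `a`, a sum of `a` products of cosines. The second is bounded by Abel
summation: for `J ≤ t / (2a)` the weights `cos (2πJ/t) - 1` are non-positive, decreasing and at
least `-(π/a)²/2`, while the partial sums of `cos (2πθJ)`, `θ = ja/t`, are at most `1/(2‖θ‖)`,
because `|e(θ) - 1| = 2|sin πθ| ≥ 4‖θ‖`. The product is therefore at most `π² / (a‖θ‖)`.
-/

open Real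

theorem abs_sum_range_mul_le_of_antitoneOn {f g : ℕ → ℝ} {n : ℕ} {B : ℝ}
    (hf : AntitoneOn f (Set.Iio n)) (hg : ∀ k ≤ n, |∑ i ∈ range k, g i| ≤ B) :
    |∑ i ∈ range n, f i * g i| ≤ B * (|f (n - 1)| + (f 0 - f (n - 1))) := by
  have hstep : ∀ i ∈ range (n - 1),
      |(f (i + 1) - f i) * ∑ k ∈ range (i + 1), g k| ≤ (f i - f (i + 1)) * B := by
    intro i hi
    have hi : i + 1 < n := by rw [mem_range] at hi; omega
    have hfi : f (i + 1) ≤ f i :=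
      hf (show i < n by omega) (show i + 1 < n from hi) (Nat.le_succ i)
    rw [abs_mul, abs_of_nonpos (sub_nonpos.2 hfi), neg_sub]
    exact mul_le_mul_of_nonneg_left (hg _ hi.le) (sub_nonneg.2 hfi)
  have hparts := sum_range_by_parts f g n
  simp only [smul_eq_mul] at hparts
  rw [hparts]
  calc _ ≤ |f (n - 1) * ∑ i ∈ range n, g i|
        + |∑ i ∈ range (n - 1), (f (i + 1) - f i) * ∑ k ∈ range (i + 1), g k| := abs_sub _ _
    _ ≤ |f (n - 1)| * B + ∑ i ∈ range (n - 1), (f i - f (i + 1)) * B := by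
        rw [abs_mul]
        gcongr
        · exact hg n le_rfl
        · exact (abs_sum_le_sum_abs _ _).trans (sum_le_sum hstep)
    _ = B * (|f (n - 1)| + (f 0 - f (n - 1))) := by rw [← sum_mul, sum_range_sub']; ring

theorem two_mul_dist2int_le_abs_sin (θ : ℝ) : 2 * dist2int θ ≤ |sin (π * θ)| := by
  have hx : |π * (θ - round θ)| ≤ π / 2 := by
    rw [abs_mul, abs_of_pos pi_pos]
    nlinarith [abs_sub_round θ, pi_pos]
  calc 2 * dist2int θ = 2 / π * |π * (θ - round θ)| := by
        rw [dist2int, abs_mul, abs_of_pos pi_pos]; field_simp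
    _ ≤ |sin (π * (θ - round θ))| := mul_abs_le_abs_sin hx
    _ = |sin (π * θ)| := by
        rw [mul_sub, mul_comm π (round θ : ℝ), sin_sub_int_mul_pi, abs_mul, abs_neg_one_zpow,
          one_mul]

theorem abs_sum_range_cos_le {θ : ℝ} (hθ : 0 < dist2int θ) (n : ℕ) :
    |∑ i ∈ range n, cos (2 * π * θ * i)| ≤ 1 / (2 * dist2int θ) := by
  set z : ℂ := Complex.exp (Complex.I * ↑(2 * π * θ))
  have hz : 4 * dist2int θ ≤ ‖z - 1‖ := by
    rw [Complex.norm_exp_I_mul_ofReal_sub_one, norm_mul, Real.norm_eq_abs, Real.norm_eq_abs,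
      abs_two, show 2 * π * θ / 2 = π * θ by ring]
    linarith [two_mul_dist2int_le_abs_sin θ]
  have hz1 : z ≠ 1 := fun h => by simp [h] at hz; linarith
  have hre : ∀ i : ℕ, (z ^ i).re = cos (2 * π * θ * i) := fun i => by
    rw [← Complex.exp_nat_mul, mul_left_comm, ← Complex.ofReal_natCast, ← Complex.ofReal_mul,
      mul_comm, Complex.exp_ofReal_mul_I_re, mul_comm]
  have hnum : ‖z ^ n - 1‖ ≤ 2 := by
    refine (norm_sub_le _ _).trans ?_
    rw [norm_pow, Complex.norm_exp_I_mul_ofReal, one_pow, norm_one]; norm_num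
  calc |∑ i ∈ range n, cos (2 * π * θ * i)| = |(∑ i ∈ range n, z ^ i).re| := by
        simp only [Complex.re_sum, hre]
    _ ≤ ‖∑ i ∈ range n, z ^ i‖ := Complex.abs_re_le_norm _
    _ = ‖z ^ n - 1‖ / ‖z - 1‖ := by rw [geom_sum_eq hz1, norm_div]
    _ ≤ 2 / (4 * dist2int θ) := div_le_div₀ zero_le_two hnum (by positivity) hz
    _ = 1 / (2 * dist2int θ) := by field_simp; norm_num

theorem card_Ires {a : ℕ} (ha : 0 < a) : #(Ires a) = a := by
  rw [Ires, Int.card_Icc]; omega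

theorem abs_sum_cos_mul_cos_le_card {ι : Type*} (s : Finset ι) (x y : ι → ℝ) :
    |∑ i ∈ s, cos (x i) * cos (y i)| ≤ #s := by
  refine (abs_sum_le_sum_abs _ _).trans ?_
  simpa using sum_le_card_nsmul s (fun i => |cos (x i) * cos (y i)|) 1 fun i _ => by
    rw [abs_mul]; exact mul_le_one₀ (abs_cos_le_one _) (abs_nonneg _) (abs_cos_le_one _)

theorem dist2int_pos_of_not_dvd {a t : ℕ} {j : ℤ} (ht : t ≠ 0) (hco : Nat.Coprime a t)
    (hj : ¬ (t : ℤ) ∣ j) : 0 < dist2int (j * a / t) := by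
  rw [dist2int, abs_pos, sub_ne_zero]
  intro h
  have hreal : (j * a : ℝ) = round ((j * a : ℝ) / t) * t := by
    rw [← h]; field_simp
  have hdvd : (t : ℤ) ∣ j * a :=
    ⟨round ((j * a : ℝ) / t), by rw [mul_comm (t : ℤ)]; exact_mod_cast hreal⟩
  exact hj ((Nat.isCoprime_iff_coprime.2 hco.symm).dvd_of_dvd_mul_right hdvd)

theorem abs_sum_Icc_cos_sub_one_mul_cos_le {a : ℕ} (t : ℕ) (ha : 0 < a) {θ : ℝ}
    (hθ : 0 < dist2int θ) :
    |∑ J ∈ Icc 1 (t / (2 * a)), (cos (2 * π * J / t) - 1) * cos (2 * π * θ * J)|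
      ≤ (π / a) ^ 2 / (2 * dist2int θ) := by
  set M := t / (2 * a)
  set F : ℕ → ℝ := fun J => cos (2 * π * J / t) - 1
  have harg : ∀ J ≤ M, 0 ≤ 2 * π * J / t ∧ 2 * π * J / t ≤ π / a := by
    intro J hJ
    have hJa : ((J * (2 * a) : ℕ) : ℝ) ≤ t := by
      exact_mod_cast (Nat.le_div_iff_mul_le (by omega)).1 hJ
    refine ⟨by positivity, ?_⟩
    calc 2 * π * J / t = π / a * ((J * (2 * a) : ℕ) / t) := by
          push_cast; field_simp
      _ ≤ π / a * 1 := by gcongr; exact div_le_one_of_le₀ hJa (Nat.cast_nonneg t)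
      _ = π / a := mul_one _
  have hπa : π / a ≤ π := div_le_self pi_pos.le (by exact_mod_cast ha)
  have hF : AntitoneOn F (Set.Iio (M + 1)) := by
    intro i hi k hk hik
    have hi := harg i (Nat.lt_succ_iff.1 hi)
    have hk := harg k (Nat.lt_succ_iff.1 hk)
    exact sub_le_sub_right (antitoneOn_cos ⟨hi.1, hi.2.trans hπa⟩ ⟨hk.1, hk.2.trans hπa⟩
      (by gcongr)) 1
  have hFM : -(π / a) ^ 2 / 2 ≤ F M := by
    have h := harg M le_rfl
    have := one_sub_sq_div_two_le_cos (x := 2 * π * M / t)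
    simp only [F]
    nlinarith
  have hFM0 : F M ≤ 0 := sub_nonpos.2 (cos_le_one _)
  -- the `J = 0` term vanishes, so Abel summation can run over `range (M + 1)`
  have hsum : ∑ J ∈ Icc 1 M, (cos (2 * π * J / t) - 1) * cos (2 * π * θ * J)
      = ∑ J ∈ range (M + 1), F J * cos (2 * π * θ * J) := by
    rw [range_eq_Ico, sum_eq_sum_Ico_succ_bot (Nat.succ_pos M)]
    simp [F, Ico_add_one_right_eq_Icc]
  rw [hsum]
  refine (abs_sum_range_mul_le_of_antitoneOn hF fun k _ => abs_sum_range_cos_le hθ k).trans ?_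
  rw [add_tsub_cancel_right, abs_of_nonpos hFM0, show F 0 = 0 by simp [F]]
  rw [show 1 / (2 * dist2int θ) * (-F M + (0 - F M)) = -(2 * F M) / (2 * dist2int θ) by ring]
  gcongr
  linarith

theorem statement15 :
    ∃ C : ℝ, 0 < C ∧ ∀ a t : ℕ, ∀ j : ℤ, 2 ≤ a → a ≤ t → Nat.Coprime a t →
      ¬ ((t : ℤ) ∣ j) →
      |∑ r ∈ Ires a,
          Real.cos (2 * Real.pi * (r : ℝ) * (invMod t a : ℝ) / (a : ℝ)) *
            Real.cos (2 * Real.pi * (j : ℝ) * (r : ℝ) / (t : ℝ))| *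
        |2 * ∑ J ∈ Finset.Icc 1 (t / (2 * a)),
            (Real.cos (2 * Real.pi * (J : ℝ) / (t : ℝ)) - 1) *
              Real.cos (2 * Real.pi * (j : ℝ) * (a : ℝ) * (J : ℝ) / (t : ℝ))|
      ≤ C * (1 / (a : ℝ)) * (1 / dist2int ((j : ℝ) * (a : ℝ) / (t : ℝ))) := by
  refine ⟨π ^ 2, by positivity, fun a t j ha hat hco hj => ?_⟩
  set θ : ℝ := j * a / t
  have hθ : 0 < dist2int θ := dist2int_pos_of_not_dvd (by omega) hco hj
  have hA : (0 : ℝ) < a := by positivity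
  have hfirst := abs_sum_cos_mul_cos_le_card (Ires a)
    (fun r => 2 * π * r * invMod t a / a) (fun r => 2 * π * j * r / t)
  rw [card_Ires (by omega)] at hfirst
  have hsecond : |2 * ∑ J ∈ Icc 1 (t / (2 * a)),
      (cos (2 * π * J / t) - 1) * cos (2 * π * j * a * J / t)| ≤ (π / a) ^ 2 / dist2int θ := by
    have hphase : ∀ J : ℕ, 2 * π * j * a * J / t = 2 * π * θ * J := fun J => by
      simp only [θ]; ring
    simp only [hphase, abs_mul, abs_two]
    calc _ ≤ 2 * ((π / a) ^ 2 / (2 * dist2int θ)) := by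
          gcongr; exact abs_sum_Icc_cos_sub_one_mul_cos_le t (by omega) hθ
      _ = (π / a) ^ 2 / dist2int θ := by field_simp
  calc _ ≤ (a : ℝ) * ((π / a) ^ 2 / dist2int θ) :=
        mul_le_mul hfirst hsecond (abs_nonneg _) hA.le
    _ = π ^ 2 * (1 / a) * (1 / dist2int θ) := by field_simp
end
end
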